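/- arXiv:2105.11654 — 4 statements merged into one kernel-verified Lean document; each statement's English description precedes it below -/
import Mathlib

section
/- Let L ≥ 1 and let n_0, n_1, ..., n_L be positive integers. For each l = 1,...,L let W_{l-1}^{ANN} be a real n_l × n_{l-1} matrix, b_{l-1}^{ANN} ∈ ℝ^{n_l}, and let max_l > 0 be real numbers (with max_0 > 0 also given). Suppose the ANN activations satisfy a_l = max(W_{l-1}^{ANN} a_{l-1} + b_{l-1}^{ANN}, 0) componentwise for l = 1,...,L, and 0 ≤ a_l ≤ max_l componentwise for l = 0,1,...,L. For each l let v_{th,l} > 0, and let W_{l-1}^{SNN}, b_{l-1}^{SNN} satisfy W_{l-1}^{SNN}/v_{th,l} = W_{l-1}^{ANN} · (max_{l-1}/max_l) and b_{l-1}^{SNN}/v_{th,l} = b_{l-1}^{ANN}/max_l. Define the limiting SNN firing rates by r_0 = a_0/max_0 and r_l = clip((W_{l-1}^{SNN} r_{l-1} + b_{l-1}^{SNN})/v_{th,l}, 0, 1) componentwise for l = 1,...,L. Then r_l = a_l/max_l for every l = 0,1,...,L. -/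
/-- Clip a real number to the interval [0,1]. -/
noncomputable def clip01 (x : ℝ) : ℝ := min (max x 0) 1

/-- **ANN-SNN conversion theorem.**
If the SNN parameters satisfy `W^SNN / v_th = W^ANN · (max_{l-1}/max_l)` and
`b^SNN / v_th = b^ANN / max_l`, then the limiting SNN firing rates equal the
normalized ANN activations `a_l / max_l` in every layer. Here `W l`, `bA l`,
`WS l`, `bS l` are the parameters feeding layer `l+1` (i.e. the paper's
`W_{l-1}`, `b_{l-1}` for layer `l`). -/
theorem ann_snn_conversion
    (L : ℕ) (hL : 1 ≤ L)
    (n : ℕ → ℕ) (hn : ∀ l, 0 < n l)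
    (W : (l : ℕ) → Matrix (Fin (n (l + 1))) (Fin (n l)) ℝ)
    (bA : (l : ℕ) → Fin (n (l + 1)) → ℝ)
    (mx : ℕ → ℝ) (hmx : ∀ l, 0 < mx l)
    (a : (l : ℕ) → Fin (n l) → ℝ)
    (hann : ∀ l < L, ∀ i, a (l + 1) i = max ((W l).mulVec (a l) i + bA l i) 0)
    (hbound : ∀ l ≤ L, ∀ i, 0 ≤ a l i ∧ a l i ≤ mx l)
    (vth : ℕ → ℝ) (hvth : ∀ l, 0 < vth l)
    (WS : (l : ℕ) → Matrix (Fin (n (l + 1))) (Fin (n l)) ℝ)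
    (bS : (l : ℕ) → Fin (n (l + 1)) → ℝ)
    (hWS : ∀ l < L, (vth (l + 1))⁻¹ • WS l = (mx l / mx (l + 1)) • W l)
    (hbS : ∀ l < L, ∀ i, bS l i / vth (l + 1) = bA l i / mx (l + 1))
    (r : (l : ℕ) → Fin (n l) → ℝ)
    (hr0 : ∀ i, r 0 i = a 0 i / mx 0)
    (hrrec : ∀ l < L, ∀ i,
      r (l + 1) i = clip01 (((WS l).mulVec (r l) i + bS l i) / vth (l + 1))) :
    ∀ l ≤ L, ∀ i, r l i = a l i / mx l := by
  intro l
  induction l with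
  | zero => intro _ i; exact hr0 i
  | succ l ih =>
    intro hlL i
    have hl : l < L := hlL
    have ihl : ∀ j, r l j = a l j / mx l := ih (le_of_lt hl)
    have hv := hvth (l + 1)
    have hm := hmx (l + 1)
    -- compute the argument of clip01
    have key : ((WS l).mulVec (r l) i + bS l i) / vth (l + 1)
        = ((W l).mulVec (a l) i + bA l i) / mx (l + 1) := by
      have hW := hWS l hl
      have hWij : ∀ j, (vth (l + 1))⁻¹ * WS l i j = (mx l / mx (l + 1)) * W l i j := by
        intro j
        have := congrFun (congrFun hW i) j
        simpa [Matrix.smul_apply] using this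
      have hmulvec : (WS l).mulVec (r l) i / vth (l + 1)
          = (W l).mulVec (a l) i / mx (l + 1) := by
        simp only [Matrix.mulVec, dotProduct, Finset.sum_div, div_eq_inv_mul,
          Finset.mul_sum]
        apply Finset.sum_congr rfl
        intro j _
        have h1 : (mx l : ℝ) ≠ 0 := (hmx l).ne'
        have h2 : (mx (l + 1) : ℝ) ≠ 0 := hm.ne'
        rw [ihl j, ← mul_assoc, hWij j]
        field_simp
      rw [add_div, add_div, hmulvec, hbS l hl i]
    rw [hrrec l hl i, key, clip01]
    have hb := hbound (l + 1) hlL i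
    have hann' := hann l hl i
    have heq : ((W l).mulVec (a l) i + bA l i) / mx (l + 1) ⊔ 0
        = a (l + 1) i / mx (l + 1) := by
      rw [hann', ← max_div_div_right hm.le, zero_div]
    rw [heq]
    have h1 : a (l + 1) i / mx (l + 1) ≤ 1 := by
      rw [div_le_one hm]; exact hb.2
    exact min_eq_left h1
end

section
/- Let W be a real n × m matrix, b ∈ ℝ^n, and v_th ≠ 0 a real number. Let s_{prev} : ℕ → ℝ^m, s : ℕ → ℝ^n and v : ℕ → ℝ^n be sequences with v(0) = 0 and, for every t ≥ 1, v(t) = v(t-1) + W s_{prev}(t) + b - v_th · s(t). Define the average rates r(t) = (1/t) Σ_{τ=1}^{t} s(τ) and r_{prev}(t) = (1/t) Σ_{τ=1}^{t} s_{prev}(τ). Then for every t ≥ 1, r(t) = (W r_{prev}(t) + b)/v_th − v(t)/(t · v_th). -/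
/-- **Telescoped firing-rate equation** for a layer of reset-by-subtraction
(soft-reset) spiking neurons: for every `t ≥ 1`,
`r(t) = (W r_prev(t) + b)/v_th − v(t)/(t·v_th)`, where
`r(t) = (1/t) ∑_{τ=1}^t s(τ)` and `r_prev(t) = (1/t) ∑_{τ=1}^t s_prev(τ)`. -/
theorem snn_rate_equation
    (n m : ℕ) (W : Matrix (Fin n) (Fin m) ℝ) (b : Fin n → ℝ)
    (vth : ℝ) (hvth : vth ≠ 0)
    (sprev : ℕ → Fin m → ℝ) (s : ℕ → Fin n → ℝ) (v : ℕ → Fin n → ℝ)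
    (hv0 : v 0 = 0)
    (hrec : ∀ t : ℕ, 1 ≤ t →
      v t = v (t - 1) + W.mulVec (sprev t) + b - vth • s t) :
    ∀ t : ℕ, 1 ≤ t →
      (t : ℝ)⁻¹ • ∑ τ ∈ Finset.Icc 1 t, s τ
        = vth⁻¹ • (W.mulVec ((t : ℝ)⁻¹ • ∑ τ ∈ Finset.Icc 1 t, sprev τ) + b)
          - ((t : ℝ) * vth)⁻¹ • v t := by
  have key : ∀ t : ℕ,
      v t = (∑ τ ∈ Finset.Icc 1 t, W.mulVec (sprev τ)) + (t : ℝ) • b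
        - vth • ∑ τ ∈ Finset.Icc 1 t, s τ := by
    intro t
    induction t with
    | zero => simp [hv0]
    | succ k ih =>
      rw [hrec (k+1) (Nat.le_add_left 1 k)]
      simp only [Nat.add_sub_cancel, ih]
      rw [Finset.sum_Icc_succ_top (Nat.le_add_left 1 k),
          Finset.sum_Icc_succ_top (Nat.le_add_left 1 k)]
      push_cast
      funext i
      simp only [Pi.add_apply, Pi.sub_apply, Pi.smul_apply, smul_eq_mul]
      ring
  intro t ht
  have htR : (t : ℝ) ≠ 0 := Nat.cast_ne_zero.mpr (by omega)
  have hWsum : W.mulVec ((t : ℝ)⁻¹ • ∑ τ ∈ Finset.Icc 1 t, sprev τ)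
      = (t : ℝ)⁻¹ • ∑ τ ∈ Finset.Icc 1 t, W.mulVec (sprev τ) := by
    rw [Matrix.mulVec_smul]
    congr 1
    exact map_sum W.mulVecLin _ _
  rw [hWsum, key t]
  funext i
  simp only [Pi.add_apply, Pi.sub_apply, Pi.smul_apply, smul_eq_mul]
  field_simp
  ring
end

section
/- Let W be a real n × m matrix, b ∈ ℝ^n, and v_th > 0. Let s_{prev} : ℕ → ℝ^m, s : ℕ → ℝ^n and v : ℕ → ℝ^n satisfy v(0) = 0, v(t) = v(t-1) + W s_{prev}(t) + b - v_th · s(t) for all t ≥ 1, every component of s(t) lies in {0,1}, and every component of v(t) lies in [0, v_th] for all t. Define r(t) = (1/t) Σ_{τ=1}^{t} s(τ) and r_{prev}(t) = (1/t) Σ_{τ=1}^{t} s_{prev}(τ). If r_{prev}(t) converges to a vector r_∞ as t → ∞, then r(t) converges to (W r_∞ + b)/v_th, and moreover (W r_∞ + b)/v_th = clip((W r_∞ + b)/v_th, 0, 1), i.e., every component of the limit lies in [0,1]. -/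
/-- For a layer of reset-by-subtraction spiking neurons with binary spikes and
membrane potentials staying in `[0, v_th]`: if the presynaptic firing rate
converges to `r_∞`, then the layer's firing rate converges to
`(W r_∞ + b)/v_th`, and this limit is componentwise in `[0,1]`, i.e. it is
fixed by clipping to `[0,1]`. -/
theorem snn_rate_limit
    (n m : ℕ) (W : Matrix (Fin n) (Fin m) ℝ) (b : Fin n → ℝ)
    (vth : ℝ) (hvth : 0 < vth)
    (sprev : ℕ → Fin m → ℝ) (s : ℕ → Fin n → ℝ) (v : ℕ → Fin n → ℝ)
    (hv0 : v 0 = 0)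
    (hrec : ∀ t : ℕ, 1 ≤ t →
      v t = v (t - 1) + W.mulVec (sprev t) + b - vth • s t)
    (hbin : ∀ t i, s t i = 0 ∨ s t i = 1)
    (hvbound : ∀ t i, 0 ≤ v t i ∧ v t i ≤ vth)
    (rinf : Fin m → ℝ)
    (hconv : Filter.Tendsto
      (fun t : ℕ => (t : ℝ)⁻¹ • ∑ τ ∈ Finset.Icc 1 t, sprev τ)
      Filter.atTop (nhds rinf)) :
    Filter.Tendsto
      (fun t : ℕ => (t : ℝ)⁻¹ • ∑ τ ∈ Finset.Icc 1 t, s τ)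
      Filter.atTop (nhds (vth⁻¹ • (W.mulVec rinf + b)))
    ∧ ∀ i, (W.mulVec rinf i + b i) / vth
        = clip01 ((W.mulVec rinf i + b i) / vth) := by
  -- telescoping identity
  have key : ∀ t : ℕ, vth • ∑ τ ∈ Finset.Icc 1 t, s τ
      = W.mulVec (∑ τ ∈ Finset.Icc 1 t, sprev τ) + (t : ℝ) • b - v t := by
    intro t
    induction t with
    | zero => simp [hv0]
    | succ t ih =>
      have h1 : (1 : ℕ) ≤ t + 1 := Nat.le_add_left 1 t
      have hr := hrec (t + 1) h1
      simp only [Nat.add_sub_cancel] at hr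
      have hs : vth • s (t + 1)
          = v t + W.mulVec (sprev (t + 1)) + b - v (t + 1) := by
        rw [hr]; abel
      rw [Finset.sum_Icc_succ_top h1, Finset.sum_Icc_succ_top h1, smul_add, ih,
        Matrix.mulVec_add, hs]
      push_cast
      rw [add_smul, one_smul]
      abel
  -- rate identity for t ≥ 1
  have rate : ∀ t : ℕ, 1 ≤ t →
      (t : ℝ)⁻¹ • ∑ τ ∈ Finset.Icc 1 t, s τ
      = vth⁻¹ • (W.mulVec ((t : ℝ)⁻¹ • ∑ τ ∈ Finset.Icc 1 t, sprev τ)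
          + b - (t : ℝ)⁻¹ • v t) := by
    intro t ht
    have htne : (t : ℝ) ≠ 0 := by positivity
    have := key t
    have hsum : (∑ τ ∈ Finset.Icc 1 t, s τ)
        = vth⁻¹ • (W.mulVec (∑ τ ∈ Finset.Icc 1 t, sprev τ) + (t : ℝ) • b - v t) := by
      rw [← this, smul_smul, inv_mul_cancel₀ (ne_of_gt hvth), one_smul]
    rw [hsum, smul_comm, Matrix.mulVec_smul]
    congr 1
    rw [smul_sub, smul_add, smul_smul, inv_mul_cancel₀ htne, one_smul]
  -- v t / t → 0
  have hv0' : Filter.Tendsto (fun t : ℕ => (t : ℝ)⁻¹ • v t) Filter.atTop (nhds 0) := by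
    rw [tendsto_pi_nhds]
    intro i
    have h0 : Filter.Tendsto (fun t : ℕ => (t : ℝ)⁻¹ * vth) Filter.atTop (nhds 0) := by
      simpa using ((tendsto_inv_atTop_nhds_zero_nat (𝕜 := ℝ)).mul_const vth)
    refine squeeze_zero (fun t => ?_) (fun t => ?_) h0
    · exact mul_nonneg (by positivity) (hvbound t i).1
    · exact mul_le_mul_of_nonneg_left (hvbound t i).2 (by positivity)
  -- continuity of mulVec
  have hW : Filter.Tendsto
      (fun t : ℕ => W.mulVec ((t : ℝ)⁻¹ • ∑ τ ∈ Finset.Icc 1 t, sprev τ))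
      Filter.atTop (nhds (W.mulVec rinf)) := by
    have hc : Continuous fun x : Fin m → ℝ => W.mulVec x := by
      have := (W.mulVecLin : (Fin m → ℝ) →ₗ[ℝ] (Fin n → ℝ)).continuous_of_finiteDimensional
      exact this
    exact (hc.tendsto rinf).comp hconv
  have hmain : Filter.Tendsto
      (fun t : ℕ => (t : ℝ)⁻¹ • ∑ τ ∈ Finset.Icc 1 t, s τ)
      Filter.atTop (nhds (vth⁻¹ • (W.mulVec rinf + b))) := by
    have := (((hW.add (tendsto_const_nhds (x := b))).sub hv0').const_smul vth⁻¹)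
    simp only [sub_zero] at this
    refine this.congr' ?_
    filter_upwards [Filter.eventually_ge_atTop 1] with t ht
    exact (rate t ht).symm
  refine ⟨hmain, fun i => ?_⟩
  -- componentwise limit in [0,1]
  have hcomp : Filter.Tendsto
      (fun t : ℕ => (t : ℝ)⁻¹ * ∑ τ ∈ Finset.Icc 1 t, s τ i)
      Filter.atTop (nhds (vth⁻¹ * (W.mulVec rinf i + b i))) := by
    have := tendsto_pi_nhds.mp hmain i
    simpa [Finset.sum_apply] using this
  have hmem : ∀ t : ℕ, 1 ≤ t →
      (t : ℝ)⁻¹ * ∑ τ ∈ Finset.Icc 1 t, s τ i ∈ Set.Icc (0:ℝ) 1 := by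
    intro t ht
    have htpos : (0:ℝ) < t := by exact_mod_cast ht
    constructor
    · apply mul_nonneg (by positivity)
      apply Finset.sum_nonneg
      intro τ _
      rcases hbin τ i with h | h <;> simp [h]
    · have hsum : ∑ τ ∈ Finset.Icc 1 t, s τ i ≤ (t : ℝ) := by
        calc ∑ τ ∈ Finset.Icc 1 t, s τ i ≤ ∑ τ ∈ Finset.Icc 1 t, (1:ℝ) := by
              apply Finset.sum_le_sum
              intro τ _
              rcases hbin τ i with h | h <;> simp [h]
          _ = (t : ℝ) := by simp [Nat.Icc_eq_range']
      calc (t : ℝ)⁻¹ * ∑ τ ∈ Finset.Icc 1 t, s τ i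
            ≤ (t : ℝ)⁻¹ * (t : ℝ) := by
              exact mul_le_mul_of_nonneg_left hsum (by positivity)
        _ = 1 := inv_mul_cancel₀ (ne_of_gt htpos)
  have hL : vth⁻¹ * (W.mulVec rinf i + b i) ∈ Set.Icc (0:ℝ) 1 := by
    have : IsClosed (Set.Icc (0:ℝ) 1) := isClosed_Icc
    exact this.mem_of_tendsto hcomp
      (Filter.eventually_atTop.mpr ⟨1, fun t ht => hmem t ht⟩)
  have hx : (W.mulVec rinf i + b i) / vth = vth⁻¹ * (W.mulVec rinf i + b i) := by
    rw [div_eq_inv_mul]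
  rw [hx]
  unfold clip01
  rw [max_eq_left hL.1, min_eq_left hL.2]
end

section
/- Let n ≥ 1, let r̂ ∈ ℝ^n satisfy r̂_i ≥ 0 for all i and r̂ ≠ 0, and let t > 0 be real. Define the fit curve K(r̂, r) = ‖r − r̂‖₂²/‖r̂‖₂² and the Rate Inference Loss Ω(r̂) = ‖r̂‖₁/‖r̂‖₂². Then with r(t) = ⌊r̂ t⌋/t (componentwise floor), K(r̂, r(t)) < 2Ω(r̂)/t. -/
/-- **Theorem 2 of the paper.** With the fit curve
`K(r̂,r) = ‖r − r̂‖₂²/‖r̂‖₂²` and the Rate Inference Loss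
`Ω(r̂) = ‖r̂‖₁/‖r̂‖₂²`, the actual firing rate `r(t) = ⌊r̂ t⌋/t` of a layer of
constant-input integrate-and-fire neurons satisfies `K(r̂, r(t)) < 2Ω(r̂)/t`. -/
theorem fit_curve_upper_bound
    (n : ℕ) (hn : 1 ≤ n) (r : Fin n → ℝ)
    (hr : ∀ i, 0 ≤ r i) (hr0 : r ≠ 0) (t : ℝ) (ht : 0 < t) :
    (∑ i, ((⌊r i * t⌋ : ℝ) / t - r i) ^ 2) / (∑ i, (r i) ^ 2)
      < 2 * ((∑ i, |r i|) / (∑ i, (r i) ^ 2)) / t := by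
  obtain ⟨j, hj⟩ : ∃ j, r j ≠ 0 := Function.ne_iff.mp hr0
  have hS : 0 < ∑ i, (r i) ^ 2 := by
    apply Finset.sum_pos' (fun i _ => sq_nonneg _)
    exact ⟨j, Finset.mem_univ j, by positivity⟩
  have hB : 0 < ∑ i, |r i| := by
    apply Finset.sum_pos' (fun i _ => abs_nonneg _)
    exact ⟨j, Finset.mem_univ j, by positivity⟩
  have hA : (∑ i, ((⌊r i * t⌋ : ℝ) / t - r i) ^ 2) ≤ (∑ i, |r i|) / t := by
    rw [Finset.sum_div]
    apply Finset.sum_le_sum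
    intro i _
    set x := r i * t with hx
    have hx0 : 0 ≤ x := mul_nonneg (hr i) ht.le
    have hxf : 0 ≤ x - ⌊x⌋ := sub_nonneg.mpr (Int.floor_le x)
    have hxf1 : x - ⌊x⌋ ≤ 1 := by
      have := Int.lt_floor_add_one x
      linarith
    have hfl : (0:ℝ) ≤ ⌊x⌋ := by
      have : (0:ℤ) ≤ ⌊x⌋ := Int.floor_nonneg.mpr hx0
      exact_mod_cast this
    have heq : (⌊x⌋ : ℝ) / t - r i = -((x - ⌊x⌋) / t) := by
      rw [hx]
      field_simp
      ring
    rw [heq, neg_sq, div_pow, abs_of_nonneg (hr i),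
      div_le_div_iff₀ (by positivity) ht]
    have h1 : (x - ⌊x⌋) ^ 2 ≤ x - ⌊x⌋ := by nlinarith
    have h2 : x - (⌊x⌋:ℝ) ≤ x := by linarith
    nlinarith [sq_nonneg t]
  have hBt : (∑ i, |r i|) / t < 2 * ((∑ i, |r i|) / t) := by
    have h := div_pos hB ht
    linarith
  have key : (∑ i, ((⌊r i * t⌋ : ℝ) / t - r i) ^ 2)
      < (2 * ((∑ i, |r i|) / t)) := lt_of_le_of_lt hA hBt
  have hrw : 2 * ((∑ i, |r i|) / (∑ i, (r i) ^ 2)) / t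
      = (2 * ((∑ i, |r i|) / t)) / (∑ i, (r i) ^ 2) := by ring
  rw [hrw, div_lt_div_iff₀ hS hS]
  nlinarith
end
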